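/- arXiv:1909.12658 — 2 statements merged into one kernel-verified Lean document; each statement's English description precedes it below -/
import Mathlib

section
/- Let n ∈ ℕ, let f : (Fin n → Bool) → Bool, let I₁,…,I_m ⊆ Fin n be pairwise disjoint finite sets, and let J ⊆ Fin n be a nonempty finite set disjoint from each I_ℓ. Writing B = I₁ ∪ … ∪ I_m, one has RC(B,J) = min_{k ∈ J} ( RC(B, J∖{k}) + w(B ∪ J, k) ). -/
open Finset

def restrict (n : ℕ) (f : (Fin n → Bool) → Bool) (S : Finset (Fin n)) (b : Fin n → Bool) :
    (Fin n → Bool) → Bool :=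
  fun x => f fun i => if i ∈ S then b i else x i

def DependsOnVar (n : ℕ) (g : (Fin n → Bool) → Bool) (i : Fin n) : Prop :=
  ∃ x : Fin n → Bool, g x ≠ g (Function.update x i (!x i))

noncomputable def width (n : ℕ) (f : (Fin n → Bool) → Bool) (I : Finset (Fin n)) (i : Fin n) : ℕ :=
  Set.ncard {g : (Fin n → Bool) → Bool | DependsOnVar n g i ∧ ∃ b, g = restrict n f Iᶜ b}

noncomputable def RC (n : ℕ) (f : (Fin n → Bool) → Bool) (B J : Finset (Fin n)) : ℕ :=
  sInf { c | ∃ σ : Fin J.card ≃ {j // j ∈ J},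
    c = ∑ j : Fin J.card,
          width n f (B ∪ (Finset.Iic j).image (fun t => ((σ t : {j // j ∈ J}) : Fin n))) (σ j) }

noncomputable def MC (n : ℕ) (f : (Fin n → Bool) → Bool) (I : Finset (Fin n)) : ℕ :=
  RC n f ∅ I

/-!
Split an ordering of `J` into its last variable `k` and an ordering of `J.erase k`. The last
level always costs `w(B ∪ J, k)`, since its prefix is all of `J`, and the earlier levels cost
exactly what that ordering of `J.erase k` costs relative to `B`. Appending `k` to an optimal
ordering of `J.erase k` gives `≤`; removing the last variable of an optimal ordering of `J`
gives `≥`.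
-/

section Ordering

variable {n : ℕ} (f : (Fin n → Bool) → Bool) (B : Finset (Fin n))

/-- Orderings are handled as injective tuples `g : Fin q → Fin n` rather than as equivalences
`Fin S.card ≃ S`, so that appending a variable (`Fin.snoc`) needs no casts. -/
noncomputable def orderingCost {q : ℕ} (g : Fin q → Fin n) : ℕ :=
  ∑ j : Fin q, width n f (B ∪ (Iic j).image g) (g j)

lemma image_univ_snoc {α : Type*} [DecidableEq α] {p : ℕ} (g : Fin p → α) (k : α) :
    univ.image (Fin.snoc g k : Fin (p + 1) → α) = insert k (univ.image g) := by
  ext; simp [Fin.exists_fin_succ', or_comm, eq_comm]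

lemma orderingCost_snoc {p : ℕ} (g : Fin p → Fin n) (k : Fin n) :
    orderingCost f B (Fin.snoc g k : Fin (p + 1) → Fin n)
      = orderingCost f B g + width n f (B ∪ insert k (univ.image g)) k := by
  have h_last : Iic (Fin.last p) = univ := by ext; simp [Fin.le_last]
  rw [orderingCost, Fin.sum_univ_castSucc, Fin.snoc_last, h_last, image_univ_snoc]
  congr 1
  refine sum_congr rfl fun i _ => ?_
  rw [← Fin.finsetImage_castSucc_Iic, image_image, Fin.snoc_castSucc]
  simp only [Function.comp_def, Fin.snoc_castSucc]

lemma RC_le_orderingCost {S : Finset (Fin n)} {q : ℕ} (g : Fin q → Fin n)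
    (hg : Function.Injective g) (hgS : univ.image g = S) :
    RC n f B S ≤ orderingCost f B g := by
  obtain rfl : S.card = q := by rw [← hgS, card_image_of_injective _ hg, card_fin]
  have hmem : ∀ t, g t ∈ S := fun t => hgS ▸ mem_image_of_mem g (mem_univ t)
  have hbij : Function.Bijective fun t => (⟨g t, hmem t⟩ : S) := by
    rw [Fintype.bijective_iff_injective_and_card]
    exact ⟨fun a b hab => hg (congrArg Subtype.val hab), by simp⟩
  exact Nat.sInf_le ⟨Equiv.ofBijective _ hbij, rfl⟩

lemma exists_orderingCost_eq_RC (S : Finset (Fin n)) :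
    ∃ (q : ℕ) (g : Fin q → Fin n), Function.Injective g ∧ univ.image g = S ∧
      orderingCost f B g = RC n f B S := by
  obtain ⟨σ, hσ⟩ : RC n f B S ∈ _ := Nat.sInf_mem ⟨_, S.equivFin.symm, rfl⟩
  refine ⟨S.card, fun t => σ t, fun a b hab => σ.injective (Subtype.val_injective hab), ?_,
    hσ.symm⟩
  ext a
  simp only [mem_image, mem_univ, true_and]
  exact ⟨fun ⟨t, ht⟩ => ht ▸ (σ t).2, fun ha => ⟨σ.symm ⟨a, ha⟩, by simp⟩⟩

lemma RC_le_RC_erase_add_width {J : Finset (Fin n)} {k : Fin n} (hk : k ∈ J) :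
    RC n f B J ≤ RC n f B (J.erase k) + width n f (B ∪ J) k := by
  obtain ⟨p, g, hg, hgJ, hcost⟩ := exists_orderingCost_eq_RC f B (J.erase k)
  have hkg : k ∉ Set.range g := by
    rintro ⟨t, rfl⟩
    have : g t ∈ J.erase (g t) := hgJ ▸ mem_image_of_mem g (mem_univ t)
    simp at this
  calc RC n f B J ≤ orderingCost f B (Fin.snoc g k : Fin (p + 1) → Fin n) :=
        RC_le_orderingCost f B _ (Fin.snoc_injective_of_injective hg hkg)
          (by rw [image_univ_snoc, hgJ, insert_erase hk])
    _ = RC n f B (J.erase k) + width n f (B ∪ J) k := by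
        rw [orderingCost_snoc, hgJ, insert_erase hk, hcost]

lemma exists_RC_eq_RC_erase_add_width {J : Finset (Fin n)} (hJ : J.Nonempty) :
    ∃ k ∈ J, RC n f B J = RC n f B (J.erase k) + width n f (B ∪ J) k := by
  obtain ⟨q, g, hg, hgJ, hcost⟩ := exists_orderingCost_eq_RC f B J
  cases q with
  | zero => simp [eq_comm, hJ.ne_empty] at hgJ
  | succ p =>
    induction g using Fin.snocCases with
    | snoc g k =>
      obtain ⟨hg, hkg⟩ := Fin.snoc_injective_iff.mp hg
      rw [image_univ_snoc] at hgJ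
      rw [orderingCost_snoc, hgJ] at hcost
      have hk : k ∈ J := hgJ ▸ mem_insert_self k _
      have hgJk : univ.image g = J.erase k := by
        rw [← hgJ, erase_insert (by simpa using hkg)]
      refine ⟨k, hk, le_antisymm (RC_le_RC_erase_add_width f B hk) ?_⟩
      rw [← hcost]
      gcongr
      exact RC_le_orderingCost f B g hg hgJk

end Ordering

theorem stmt_2_general (n m : ℕ) (f : (Fin n → Bool) → Bool) (Is : Fin m → Finset (Fin n))
    (J : Finset (Fin n)) (hJ : J.Nonempty) :
    RC n f (Finset.univ.biUnion Is) J
      = J.inf' hJ (fun k =>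
          RC n f (Finset.univ.biUnion Is) (J.erase k)
            + width n f (Finset.univ.biUnion Is ∪ J) k) := by
  refine le_antisymm (le_inf' _ _ fun k hk => RC_le_RC_erase_add_width f _ hk) ?_
  obtain ⟨k, hk, hRC⟩ := exists_RC_eq_RC_erase_add_width f (univ.biUnion Is) hJ
  exact hRC ▸ inf'_le _ hk

/-- Lemma 5 (generalized DP lemma): for pairwise disjoint `I₁,…,I_m` and nonempty `J`
disjoint from each `I_ℓ`, writing `B = I₁ ∪ … ∪ I_m`,
`RC(B, J) = min_{k ∈ J} (RC(B, J \ {k}) + w(B ∪ J, k))`. -/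
theorem stmt_2 (n m : ℕ) (f : (Fin n → Bool) → Bool) (Is : Fin m → Finset (Fin n))
    (hdisj : ∀ a b : Fin m, a ≠ b → Disjoint (Is a) (Is b))
    (J : Finset (Fin n)) (hJ : J.Nonempty) (hJdisj : ∀ a : Fin m, Disjoint J (Is a)) :
    RC n f (Finset.univ.biUnion Is) J
      = J.inf' hJ (fun k =>
          RC n f (Finset.univ.biUnion Is) (J.erase k)
            + width n f (Finset.univ.biUnion Is ∪ J) k) :=
  stmt_2_general n m f Is J hJ
end

section
/- Let n ∈ ℕ, let f : (Fin n → Bool) → Bool, let B, J ⊆ Fin n be disjoint finite sets with J nonempty, and let k be an integer with 1 ≤ k ≤ |J|. Then RC(B,J) = min over finite sets K ⊆ J with |K| = k of ( RC(B,K) + RC(B ∪ K, J∖K) ). -/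
open Finset

/-!
An ordering of `J` is the same as a duplicate-free list enumerating `J`, and the cost of a list
splits additively along `l₁ ++ l₂`: the levels of `l₂` are charged with everything in `l₁`
already read. Cutting an optimal ordering of `J` after its first `k` entries `K` gives
`RC(B, J) ≥ RC(B, K) + RC(B ∪ K, J \ K)`; concatenating optimal orderings of `K` and `J \ K`
gives the reverse inequality for every `K ⊆ J`.
-/

section PrefixCost

variable {α : Type*} [DecidableEq α]

def prefixCost (w : Finset α → α → ℕ) : Finset α → List α → ℕ
  | _, [] => 0
  | B, i :: t => w (insert i B) i + prefixCost w (insert i B) t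

theorem prefixCost_append (w : Finset α → α → ℕ) (l₁ l₂ : List α) (B : Finset α) :
    prefixCost w B (l₁ ++ l₂) = prefixCost w B l₁ + prefixCost w (B ∪ l₁.toFinset) l₂ := by
  induction l₁ generalizing B with
  | nil => simp [prefixCost]
  | cons i t ih =>
    simp only [List.cons_append, prefixCost, List.toFinset_cons, ih, add_assoc,
      Finset.union_insert, Finset.insert_union]

theorem image_Iic_succ {m : ℕ} (j : Fin m) (g : Fin (m + 1) → α) :
    (Iic j.succ).image g = insert (g 0) ((Iic j).image fun t => g t.succ) := by
  ext a
  simp only [mem_image, mem_insert, mem_Iic]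
  constructor
  · rintro ⟨t, ht, rfl⟩
    rcases Fin.eq_zero_or_eq_succ t with rfl | ⟨s, rfl⟩
    · exact Or.inl rfl
    · exact Or.inr ⟨s, Fin.succ_le_succ_iff.mp ht, rfl⟩
  · rintro (rfl | ⟨s, hs, rfl⟩)
    · exact ⟨0, Fin.zero_le _, rfl⟩
    · exact ⟨s.succ, Fin.succ_le_succ_iff.mpr hs, rfl⟩

theorem sum_eq_prefixCost_ofFn (w : Finset α → α → ℕ) {m : ℕ} (g : Fin m → α)
    (B : Finset α) :
    ∑ j : Fin m, w (B ∪ (Iic j).image g) (g j) = prefixCost w B (List.ofFn g) := by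
  induction m generalizing B with
  | zero => simp [prefixCost]
  | succ m ih =>
    have hIic_zero : (Iic (0 : Fin (m + 1))).image g = {g 0} := by
      rw [show Iic (0 : Fin (m + 1)) = {0} by ext t; simp, image_singleton]
    rw [Fin.sum_univ_succ, List.ofFn_succ, prefixCost, hIic_zero, union_singleton, ← ih]
    simp only [image_Iic_succ, union_insert, insert_union]

end PrefixCost

section RelativeCost

variable {n : ℕ} {f : (Fin n → Bool) → Bool}

theorem RC_eq_sInf_prefixCost (B J : Finset (Fin n)) :
    RC n f B J = sInf {c | ∃ l : List (Fin n), l.Nodup ∧ l.toFinset = J ∧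
      c = prefixCost (width n f) B l} := by
  unfold RC
  congr 1
  ext c
  simp only [Set.mem_ofPred_eq]
  constructor
  · rintro ⟨σ, rfl⟩
    refine ⟨List.ofFn fun j => (σ j : Fin n), ?_, ?_, sum_eq_prefixCost_ofFn _ _ B⟩
    · exact List.nodup_ofFn.mpr fun a b h => σ.injective (Subtype.ext h)
    · ext a
      simp only [List.mem_toFinset, List.mem_ofFn]
      exact ⟨fun ⟨j, hj⟩ => hj ▸ (σ j).2, fun ha => ⟨σ.symm ⟨a, ha⟩, by simp⟩⟩
  · rintro ⟨l, hnd, rfl, rfl⟩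
    have hlen : l.length = l.toFinset.card := (List.toFinset_card_of_nodup hnd).symm
    refine ⟨(finCongr hlen.symm).trans ((hnd.getEquiv l).trans
      (Equiv.subtypeEquivRight fun x => List.mem_toFinset.symm)), ?_⟩
    rw [sum_eq_prefixCost_ofFn]
    congr 1
    exact List.ext_get (by simp [hlen]) fun i _ _ => by simp

theorem RC_le_prefixCost {B J : Finset (Fin n)} {l : List (Fin n)} (hnd : l.Nodup)
    (hl : l.toFinset = J) : RC n f B J ≤ prefixCost (width n f) B l := by
  rw [RC_eq_sInf_prefixCost]
  exact Nat.sInf_le ⟨l, hnd, hl, rfl⟩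

theorem exists_RC_eq_prefixCost (B J : Finset (Fin n)) :
    ∃ l : List (Fin n), l.Nodup ∧ l.toFinset = J ∧ RC n f B J = prefixCost (width n f) B l := by
  rw [RC_eq_sInf_prefixCost]
  exact Nat.sInf_mem (s := {c | ∃ l : List (Fin n), l.Nodup ∧ l.toFinset = J ∧
    c = prefixCost (width n f) B l})
    ⟨prefixCost (width n f) B J.toList, J.toList, J.nodup_toList, J.toList_toFinset, rfl⟩

theorem RC_le_RC_add_RC {B J K : Finset (Fin n)} (hKJ : K ⊆ J) :
    RC n f B J ≤ RC n f B K + RC n f (B ∪ K) (J \ K) := by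
  obtain ⟨l₁, hnd₁, rfl, h₁⟩ := exists_RC_eq_prefixCost (f := f) B K
  obtain ⟨l₂, hnd₂, hl₂, h₂⟩ := exists_RC_eq_prefixCost (f := f) (B ∪ l₁.toFinset) (J \ l₁.toFinset)
  have hdisj : l₁.Disjoint l₂ := fun a ha₁ ha₂ =>
    (mem_sdiff.mp (hl₂ ▸ List.mem_toFinset.mpr ha₂)).2 (List.mem_toFinset.mpr ha₁)
  have hl : (l₁ ++ l₂).toFinset = J := by
    rw [List.toFinset_append, hl₂, union_sdiff_of_subset hKJ]
  rw [h₁, h₂, ← prefixCost_append]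
  exact RC_le_prefixCost (hnd₁.append hnd₂ hdisj) hl

theorem exists_RC_eq_RC_add_RC (B J : Finset (Fin n)) {k : ℕ} (hk : k ≤ J.card) :
    ∃ K ∈ J.powersetCard k, RC n f B J = RC n f B K + RC n f (B ∪ K) (J \ K) := by
  obtain ⟨l, hnd, rfl, hl⟩ := exists_RC_eq_prefixCost (f := f) B J
  have hlen : l.length = l.toFinset.card := (List.toFinset_card_of_nodup hnd).symm
  have hnd_take := (List.take_sublist k l).nodup hnd
  have hnd_drop := (List.drop_sublist k l).nodup hnd
  have hsplit : l.toFinset = (l.take k).toFinset ∪ (l.drop k).toFinset := by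
    rw [← List.toFinset_append, List.take_append_drop]
  have hdrop : l.toFinset \ (l.take k).toFinset = (l.drop k).toFinset := by
    rw [hsplit, union_sdiff_left, sdiff_eq_self_of_disjoint]
    exact List.disjoint_toFinset_iff_disjoint.mpr (List.disjoint_take_drop hnd le_rfl).symm
  have hsub : (l.take k).toFinset ⊆ l.toFinset := hsplit ▸ subset_union_left
  refine ⟨(l.take k).toFinset, mem_powersetCard.mpr ⟨hsub, ?_⟩,
    le_antisymm (RC_le_RC_add_RC hsub) ?_⟩
  · rw [List.toFinset_card_of_nodup hnd_take, List.length_take]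
    omega
  · rw [hdrop]
    calc RC n f B (l.take k).toFinset + RC n f (B ∪ (l.take k).toFinset) (l.drop k).toFinset
        ≤ prefixCost (width n f) B (l.take k)
            + prefixCost (width n f) (B ∪ (l.take k).toFinset) (l.drop k) :=
          add_le_add (RC_le_prefixCost hnd_take rfl) (RC_le_prefixCost hnd_drop rfl)
      _ = RC n f B l.toFinset := by rw [← prefixCost_append, List.take_append_drop, hl]

end RelativeCost

theorem stmt_3_general (n : ℕ) (f : (Fin n → Bool) → Bool) (B J : Finset (Fin n))
    (k : ℕ) (hk2 : k ≤ J.card) :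
    RC n f B J
      = (J.powersetCard k).inf' (Finset.powersetCard_nonempty.mpr hk2)
          (fun K => RC n f B K + RC n f (B ∪ K) (J \ K)) := by
  refine le_antisymm (le_inf' _ _ fun K hK => RC_le_RC_add_RC (mem_powersetCard.mp hK).1) ?_
  obtain ⟨K, hK, hRC⟩ := exists_RC_eq_RC_add_RC (f := f) B J hk2
  exact hRC ▸ inf'_le _ hK

/-- Lemma 7 (divide and conquer): for disjoint `B`, `J` with `J` nonempty and `1 ≤ k ≤ |J|`,
`RC(B, J) = min_{K ⊆ J, |K| = k} (RC(B, K) + RC(B ∪ K, J \ K))`. -/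
theorem stmt_3 (n : ℕ) (f : (Fin n → Bool) → Bool) (B J : Finset (Fin n))
    (hBJ : Disjoint B J) (hJ : J.Nonempty) (k : ℕ) (hk1 : 1 ≤ k) (hk2 : k ≤ J.card) :
    RC n f B J
      = (J.powersetCard k).inf' (Finset.powersetCard_nonempty.mpr hk2)
          (fun K => RC n f B K + RC n f (B ∪ K) (J \ K)) :=
  stmt_3_general n f B J k hk2
end
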